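/- arXiv:2108.11946 — 3 statements merged into one kernel-verified Lean document; each statement's English description precedes it below -/
import Mathlib

section
/- Let H be a connected graph on k ≥ 2 vertices with independence number α = α(H). Then for every positive integer n, r(nH) ≥ (2k − α)·n + r(𝒟_c(H), 𝒟(H)) − 2. In particular, the complete graph on (2k − α)·n + r(𝒟_c(H), 𝒟(H)) − 3 vertices admits a 2-colouring of its edges with no monochromatic copy of nH. -/
open Finset

/-- There is a copy (subgraph embedding) of `H` in `G` whose image lies in `A`. -/
def SimpleGraph.CopyIn {W V : Type*} (H : SimpleGraph W) (G : SimpleGraph V) (A : Set V) :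
    Prop :=
  ∃ f : W → V, Function.Injective f ∧ (∀ a, f a ∈ A) ∧
    ∀ ⦃a b⦄, H.Adj a b → G.Adj (f a) (f b)

/-- There is a copy of `H` in `G`. -/
def SimpleGraph.ContainsCopy {W V : Type*} (H : SimpleGraph W) (G : SimpleGraph V) : Prop :=
  H.CopyIn G Set.univ

/-- The disjoint union of `n` copies of `H`, denoted `nH` in the paper. -/
def SimpleGraph.nCopies {W : Type*} (n : ℕ) (H : SimpleGraph W) : SimpleGraph (Fin n × W) where
  Adj x y := x.1 = y.1 ∧ H.Adj x.2 y.2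
  symm := ⟨fun x y h => ⟨h.1.symm, h.2.symm⟩⟩
  loopless := ⟨fun x h => H.irrefl h.2⟩

/-- `N` is Ramsey for `H`: every red/blue colouring of the edges of `K_N` (encoded by its
red graph `R`, the blue graph being `Rᶜ`) contains a monochromatic copy of `H`. -/
def SimpleGraph.RamseyProp {W : Type*} (H : SimpleGraph W) (N : ℕ) : Prop :=
  ∀ R : SimpleGraph (Fin N), H.ContainsCopy R ∨ H.ContainsCopy Rᶜ

/-- The Ramsey number `r(H)`. -/
noncomputable def SimpleGraph.ramsey {W : Type*} (H : SimpleGraph W) : ℕ :=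
  sInf {N | H.RamseyProp N}

/-- `I` is an independent set of `G`. -/
def SimpleGraph.IsIndep {V : Type*} (G : SimpleGraph V) (I : Set V) : Prop :=
  I.Pairwise fun a b => ¬ G.Adj a b

/-- The independence number `α(G)`. -/
noncomputable def SimpleGraph.indepNumber {V : Type*} (G : SimpleGraph V) : ℕ :=
  sSup {n | ∃ I : Finset V, G.IsIndep ↑I ∧ I.card = n}

/-- `I` is an independent set of `G`, maximal with respect to inclusion. -/
def SimpleGraph.IsMaximalIndep {V : Type*} (G : SimpleGraph V) (I : Set V) : Prop :=
  G.IsIndep I ∧ ∀ J : Set V, G.IsIndep J → I ⊆ J → J = I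

/-- `R` contains a copy of some member of the family `𝒟(G)` of graphs obtained from `G`
by removing a maximal independent set. -/
def SimpleGraph.ContainsCopyOfD {V U : Type*} (G : SimpleGraph V) (R : SimpleGraph U) : Prop :=
  ∃ I : Set V, G.IsMaximalIndep I ∧ (G.induce Iᶜ).ContainsCopy R

/-- `R` contains a copy of some connected component of `H`, i.e. of a member of `𝒞(H)`. -/
def SimpleGraph.ContainsCopyOfComp {V U : Type*} (H : SimpleGraph V) (R : SimpleGraph U) :
    Prop :=
  ∃ c : H.ConnectedComponent, (H.induce c.supp).ContainsCopy R

/-- `R` contains a copy of some member of the family `𝒟_c(H)`: graphs obtained by removing a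
maximal independent set of `H` and taking a connected component of the remainder. -/
def SimpleGraph.ContainsCopyOfDc {V U : Type*} (H : SimpleGraph V) (R : SimpleGraph U) : Prop :=
  ∃ I : Set V, H.IsMaximalIndep I ∧
    ∃ c : (H.induce Iᶜ).ConnectedComponent, ((H.induce Iᶜ).induce c.supp).ContainsCopy R

/-- `R` contains a copy of some member of the family `𝒟'_c(H)`: graphs obtained by removing an
independent set of `H` of maximum size `α(H)` and taking a connected component of the
remainder. -/
def SimpleGraph.ContainsCopyOfDc' {V U : Type*} (H : SimpleGraph V) (R : SimpleGraph U) : Prop :=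
  ∃ I : Set V, H.IsIndep I ∧ I.ncard = H.indepNumber ∧
    ∃ c : (H.induce Iᶜ).ConnectedComponent, ((H.induce Iᶜ).induce c.supp).ContainsCopy R

/-- The asymmetric Ramsey number `r(G, H)`. -/
noncomputable def SimpleGraph.ramsey2 {V W : Type*} (G : SimpleGraph V) (H : SimpleGraph W) :
    ℕ :=
  sInf {N | ∀ R : SimpleGraph (Fin N), G.ContainsCopy R ∨ H.ContainsCopy Rᶜ}

/-- The Ramsey number `r(𝒟(G), H)`. -/
noncomputable def SimpleGraph.ramseyDFam {V W : Type*} (G : SimpleGraph V)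
    (H : SimpleGraph W) : ℕ :=
  sInf {N | ∀ R : SimpleGraph (Fin N), G.ContainsCopyOfD R ∨ H.ContainsCopy Rᶜ}

/-- The Ramsey number `r(𝒟(G), 𝒞(H))`. -/
noncomputable def SimpleGraph.ramseyDCFam {V W : Type*} (G : SimpleGraph V)
    (H : SimpleGraph W) : ℕ :=
  sInf {N | ∀ R : SimpleGraph (Fin N), G.ContainsCopyOfD R ∨ H.ContainsCopyOfComp Rᶜ}

/-- The Ramsey number `r(𝒟_c(H), 𝒟(H))`. -/
noncomputable def SimpleGraph.ramseyDcD {V : Type*} (H : SimpleGraph V) : ℕ :=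
  sInf {N | ∀ R : SimpleGraph (Fin N), H.ContainsCopyOfDc R ∨ H.ContainsCopyOfD Rᶜ}

/-- The Ramsey number `r(𝒟'_c(H), 𝒟(H))`. -/
noncomputable def SimpleGraph.ramseyDc'D {V : Type*} (H : SimpleGraph V) : ℕ :=
  sInf {N | ∀ R : SimpleGraph (Fin N), H.ContainsCopyOfDc' R ∨ H.ContainsCopyOfD Rᶜ}

/-- An `H`-tie in the colouring with red graph `Red`: a set of `2|H| - α(H)` vertices
containing both a red and a blue copy of `H`. -/
def SimpleGraph.IsTie {V : Type*} {k : ℕ} (H : SimpleGraph (Fin k)) (Red : SimpleGraph V)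
    (S : Finset V) : Prop :=
  S.card = 2 * k - H.indepNumber ∧ H.CopyIn Red ↑S ∧ H.CopyIn Redᶜ ↑S

/-- A `K_k`-tiling of `G`: pairwise disjoint `k`-cliques covering all but at most
`|G| mod k` vertices. -/
def SimpleGraph.HasKkTiling {V : Type*} [Fintype V] [DecidableEq V] (G : SimpleGraph V)
    (k : ℕ) : Prop :=
  ∃ T : Finset (Finset V), (∀ S ∈ T, G.IsNClique k S) ∧
    (T : Set (Finset V)).PairwiseDisjoint id ∧
    Fintype.card V - (T.biUnion id).card ≤ Fintype.card V % k

/-- A perfect `K_k`-tiling of `G`: pairwise disjoint `k`-cliques covering all vertices. -/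
def SimpleGraph.HasPerfectKkTiling {V : Type*} [Fintype V] [DecidableEq V] (G : SimpleGraph V)
    (k : ℕ) : Prop :=
  ∃ T : Finset (Finset V), (∀ S ∈ T, G.IsNClique k S) ∧
    (T : Set (Finset V)).PairwiseDisjoint id ∧ T.biUnion id = Finset.univ

/-- `a` and `b` are joined by an edge of colour `c` (where `true` is red and `false` is blue)
in the colouring with red graph `Red`. -/
def SimpleGraph.colorAdj {V : Type*} (Red : SimpleGraph V) (c : Bool) (a b : V) : Prop :=
  if c then Red.Adj a b else Redᶜ.Adj a b

/-!
Colour `K_N`, `N = ((k - α) n - 1) + (k n - 1) + (r - 1)` with `r = r(𝒟_c(H), 𝒟(H))`, on three parts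
`A`, `B`, `C`: `A` is a red clique, `B` a blue clique, `A–B` and `B–C` are red, `A–C` is blue, and
`C` carries a colouring `χ` with no red member of `𝒟_c(H)` and no blue member of `𝒟(H)`.

In a red copy of `H` the vertices in `B` are independent; extend them to a maximal independent set
`J`. A vertex of `H - J` sent to `C` would drag its whole component of `H - J` into `C`, so
`H - J` lands in `A`, and `n` disjoint red copies would need `(k - α) n > |A|` vertices of `A`.
A blue copy of the connected graph `H` lies inside `B` or misses it; as `|B| < k n`, some copy
misses `B`, its vertices in `A` are independent, and removing a maximal independent set containing
them leaves a blue member of `𝒟(H)` inside `C`.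
-/

theorem card_mul_le_card_of_injective {ι W X Y : Type*} [Fintype ι] [Fintype W] [Fintype Y]
    {f : ι × W → X} (hf : f.Injective) {e : Y → X} (he : e.Injective) {m : ℕ}
    (h : ∀ i, m ≤ {w | f (i, w) ∈ Set.range e}.ncard) : Fintype.card ι * m ≤ Fintype.card Y := by
  classical
  have hfibres : ∑ i, {w | f (i, w) ∈ Set.range e}.ncard = (f ⁻¹' Set.range e).ncard := by
    simp only [Set.ncard_eq_toFinset_card', Set.toFinset_ofPred, Set.preimage, card_filter,
      Fintype.sum_prod_type]
  calc Fintype.card ι * m = ∑ _i : ι, m := by simp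
    _ ≤ ∑ i, {w | f (i, w) ∈ Set.range e}.ncard := sum_le_sum fun i _ => h i
    _ = (f ⁻¹' Set.range e).ncard := hfibres
    _ ≤ (Set.range e).ncard := Set.ncard_le_ncard_of_injOn f (fun _ hp => hp) hf.injOn
    _ = Fintype.card Y := by rw [Set.ncard_range_of_injective he, Nat.card_eq_fintype_card]

theorem Nat.not_sInf_sub_one {P : ℕ → Prop} (h0 : ¬ P 0) : ¬ P (sInf {n | P n} - 1) := by
  rcases Nat.eq_zero_or_pos (sInf {n | P n}) with h | h
  · rwa [h]
  · exact Nat.notMem_of_lt_sInf (s := {n | P n}) (by omega)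

namespace SimpleGraph

variable {V W X : Type*}

theorem containsCopy_iff_isContained {H : SimpleGraph W} {G : SimpleGraph V} :
    H.ContainsCopy G ↔ H ⊑ G :=
  ⟨fun ⟨f, hf, _, hadj⟩ => ⟨⟨⟨f, fun h => hadj h⟩, hf⟩⟩,
    fun ⟨f⟩ => ⟨f, f.injective, fun _ => trivial, fun _ _ h => f.toHom.map_adj h⟩⟩

theorem isContained_comap_of_forall_mem_range {A : SimpleGraph V} {G : SimpleGraph X}
    (f : Copy A G) (ι : W → X) (h : ∀ v, f v ∈ Set.range ι) : A ⊑ G.comap ι := by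
  choose φ hφ using h
  refine ⟨⟨⟨φ, fun {a b} hab => ?_⟩, fun a b (hab : φ a = φ b) => f.injective ?_⟩⟩
  · simpa [hφ] using f.toHom.map_adj hab
  · change f a = f b
    rw [← hφ a, ← hφ b, hab]

theorem IsContained.or_compl_of_comap {H : SimpleGraph W} (f : V ↪ X) (R : SimpleGraph X) :
    H ⊑ R.comap f ∨ H ⊑ (R.comap f)ᶜ → H ⊑ R ∨ H ⊑ Rᶜ :=
  Or.imp (·.trans (Embedding.comap f R).isContained)
    (·.trans (Embedding.complEquiv (Embedding.comap f R)).isContained)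

theorem Reachable.mem_of_adj_closed {G : SimpleGraph V} {S : Set V}
    (hS : ∀ ⦃x y⦄, G.Adj x y → x ∈ S → y ∈ S) {u v : V} (h : G.Reachable u v) (hu : u ∈ S) :
    v ∈ S := by
  obtain ⟨p⟩ := h
  by_contra hv
  obtain ⟨d, -, hd, hd'⟩ := p.exists_boundary_dart S hu hv
  exact hd' (hS d.adj hd)

theorem Connected.exists_adj [Nontrivial W] {H : SimpleGraph W} (hH : H.Connected) :
    ∃ u v, H.Adj u v := by
  obtain ⟨x, y, hxy⟩ := exists_pair_ne W
  obtain ⟨p⟩ := hH.preconnected x y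
  obtain ⟨d, -, -, -⟩ := p.exists_boundary_dart {x} rfl hxy.symm
  exact ⟨_, _, d.adj⟩

theorem IsIndep.exists_isMaximalIndep_superset [Finite V] {G : SimpleGraph V} {I : Set V}
    (hI : G.IsIndep I) : ∃ J, I ⊆ J ∧ G.IsMaximalIndep J := by
  obtain ⟨J, hIJ, hJ⟩ := Finite.exists_le_maximal (p := G.IsIndep) hI
  exact ⟨J, hIJ, hJ.prop, fun K hK hJK => (hJ.le_of_ge hK hJK).antisymm hJK⟩

theorem bddAbove_indepCards [Fintype V] (G : SimpleGraph V) :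
    BddAbove {n | ∃ I : Finset V, G.IsIndep ↑I ∧ I.card = n} := by
  refine ⟨Fintype.card V, ?_⟩
  rintro _ ⟨I, -, rfl⟩
  exact I.card_le_univ

theorem IsIndep.ncard_le_indepNumber [Fintype V] {G : SimpleGraph V} {I : Set V}
    (hI : G.IsIndep I) : I.ncard ≤ G.indepNumber := by
  classical
  rw [Set.ncard_eq_toFinset_card']
  exact le_csSup G.bddAbove_indepCards ⟨I.toFinset, by simpa using hI, rfl⟩

theorem indepNumber_lt_card [Fintype V] {G : SimpleGraph V} {x y : V} (hxy : G.Adj x y) :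
    G.indepNumber < Fintype.card V := by
  obtain ⟨I, hI, hcard⟩ : G.indepNumber ∈ {n | ∃ I : Finset V, G.IsIndep ↑I ∧ I.card = n} :=
    Nat.sSup_mem ⟨0, ∅, by simp [IsIndep], rfl⟩ G.bddAbove_indepCards
  obtain h | h : x ∉ I ∨ y ∉ I := by
    by_contra! h
    exact hI h.1 h.2 hxy.ne hxy
  all_goals rw [← hcard]; exact Finset.card_lt_univ_of_notMem h

theorem IsMaximalIndep.compl_nonempty {G : SimpleGraph V} {I : Set V} (hI : G.IsMaximalIndep I)
    {x y : V} (hxy : G.Adj x y) : Iᶜ.Nonempty := by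
  by_contra! h
  rw [Set.compl_empty_iff] at h
  exact hI.1 (h ▸ Set.mem_univ x) (h ▸ Set.mem_univ y) hxy.ne hxy

theorem exists_isNClique_or_isNClique_compl (s t : ℕ) :
    ∃ N, ∀ {V : Type*} (G : SimpleGraph V) (A : Finset V), N ≤ #A →
      (∃ S ⊆ A, G.IsNClique s S) ∨ ∃ S ⊆ A, Gᶜ.IsNClique t S := by
  induction s generalizing t with
  | zero => exact ⟨0, fun G A _ => Or.inl ⟨∅, empty_subset _, by simp⟩⟩
  | succ s ihs =>
    induction t with
    | zero => exact ⟨0, fun G A _ => Or.inr ⟨∅, empty_subset _, by simp⟩⟩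
    | succ t iht =>
      obtain ⟨N₁, h₁⟩ := ihs (t + 1)
      obtain ⟨N₂, h₂⟩ := iht
      refine ⟨N₁ + N₂ + 1, fun G A hA => ?_⟩
      classical
      obtain ⟨v, hv⟩ : A.Nonempty := card_pos.1 (by omega)
      set red := {w ∈ A.erase v | G.Adj v w}
      set blue := {w ∈ A.erase v | ¬ G.Adj v w}
      have hred : red ⊆ A := (filter_subset _ _).trans (erase_subset _ _)
      have hblue : blue ⊆ A := (filter_subset _ _).trans (erase_subset _ _)
      have hsplit : #red + #blue + 1 = #A := by
        rw [card_filter_add_card_filter_not, card_erase_add_one hv]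
      by_cases hN₁ : N₁ ≤ #red
      · rcases h₁ G red hN₁ with ⟨S, hS, hSc⟩ | ⟨S, hS, hSc⟩
        · refine Or.inl ⟨insert v S, insert_subset hv (hS.trans hred), hSc.insert ?_⟩
          exact fun w hw => (mem_filter.1 (hS hw)).2
        · exact Or.inr ⟨S, hS.trans hred, hSc⟩
      · rcases h₂ G blue (by omega) with ⟨S, hS, hSc⟩ | ⟨S, hS, hSc⟩
        · exact Or.inl ⟨S, hS.trans hblue, hSc⟩
        · refine Or.inr ⟨insert v S, insert_subset hv (hS.trans hblue), hSc.insert ?_⟩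
          intro w hw
          obtain ⟨hwA, hvw⟩ := mem_filter.1 (hS hw)
          exact (G.compl_adj v w).2 ⟨(ne_of_mem_erase hwA).symm, hvw⟩

theorem isContained_of_isNClique [Fintype W] {H : SimpleGraph W} {G : SimpleGraph V}
    {S : Finset V} {m : ℕ} (hS : G.IsNClique m S) (hm : Fintype.card W ≤ m) : H ⊑ G := by
  have hW : Nonempty (W ↪ (S : Set V)) :=
    Function.Embedding.nonempty_of_card_le (by simpa [hS.card_eq] using hm)
  calc H ⊑ completeGraph (S : Set V) := isContained_top_iff.2 hW
    _ = G.induce S := (induce_eq_top.2 hS.isClique).symm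
    _ ⊑ G := (Copy.induce G _).isContained

theorem ramseyProp_iff {H : SimpleGraph W} {N : ℕ} :
    H.RamseyProp N ↔ ∀ R : SimpleGraph (Fin N), H ⊑ R ∨ H ⊑ Rᶜ := by
  simp only [RamseyProp, containsCopy_iff_isContained]

theorem RamseyProp.mono {H : SimpleGraph W} {N M : ℕ} (hN : H.RamseyProp N) (hNM : N ≤ M) :
    H.RamseyProp M :=
  ramseyProp_iff.2 fun R =>
    IsContained.or_compl_of_comap (Fin.castLEEmb hNM) R (ramseyProp_iff.1 hN _)

theorem exists_ramseyProp [Fintype W] (H : SimpleGraph W) : ∃ N, H.RamseyProp N := by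
  obtain ⟨N, hN⟩ := exists_isNClique_or_isNClique_compl (Fintype.card W) (Fintype.card W)
  refine ⟨N, ramseyProp_iff.2 fun R => ?_⟩
  rcases hN R univ (by simp) with ⟨S, -, hS⟩ | ⟨S, -, hS⟩
  · exact Or.inl (isContained_of_isNClique hS le_rfl)
  · exact Or.inr (isContained_of_isNClique hS le_rfl)

theorem lt_ramsey_of_not_ramseyProp [Fintype W] {H : SimpleGraph W} {N : ℕ}
    (h : ¬ H.RamseyProp N) : N < H.ramsey := by
  by_contra! hle
  exact h (RamseyProp.mono (Nat.sInf_mem (exists_ramseyProp H)) hle)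

theorem exists_not_containsCopyOfDc_not_containsCopyOfD_compl {H : SimpleGraph V} {x y : V}
    (hxy : H.Adj x y) : ∃ χ : SimpleGraph (Fin (H.ramseyDcD - 1)),
      ¬ H.ContainsCopyOfDc χ ∧ ¬ H.ContainsCopyOfD χᶜ := by
  -- no Ramsey theorem is needed: were no `N` good, `ramseyDcD = sInf ∅ = 0`
  have h := Nat.not_sInf_sub_one
    (P := fun N => ∀ R : SimpleGraph (Fin N), H.ContainsCopyOfDc R ∨ H.ContainsCopyOfD Rᶜ) ?_
  · simp only [not_forall, not_or] at h
    exact h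
  · intro h0
    rcases h0 ⊥ with ⟨I, -, c, f, -⟩ | ⟨I, hI, f, -⟩
    · exact (f ⟨_, c.nonempty_supp.some_mem⟩).elim0
    · obtain ⟨v, hv⟩ := hI.compl_nonempty hxy
      exact (f ⟨v, hv⟩).elim0

section Tripartite

/-- The red graph of the colouring with parts `A = α`, `B = β`, `C = γ`. -/
def tripartiteRed (α β : Type*) {γ : Type*} (χ : SimpleGraph γ) : SimpleGraph (α ⊕ β ⊕ γ) where
  Adj
    | .inl x, .inl y => x ≠ y
    | .inl _, .inr (.inl _) | .inr (.inl _), .inl _ => True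
    | .inr (.inl _), .inr (.inr _) | .inr (.inr _), .inr (.inl _) => True
    | .inr (.inr x), .inr (.inr y) => χ.Adj x y
    | _, _ => False
  symm := by
    refine ⟨?_⟩
    rintro (x | x | x) (y | y | y) h <;> first | exact h.symm | trivial
  loopless := by
    refine ⟨?_⟩
    rintro (x | x | x) h <;> first | exact h rfl | exact h.elim | exact χ.irrefl h

variable {α β γ : Type*} {χ : SimpleGraph γ}

theorem tripartiteRed_comap : (tripartiteRed α β χ).comap (Sum.inr ∘ Sum.inr) = χ := rfl

theorem compl_tripartiteRed_comap : (tripartiteRed α β χ)ᶜ.comap (Sum.inr ∘ Sum.inr) = χᶜ := by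
  ext x y
  simp [tripartiteRed]

theorem Copy.card_sub_indepNumber_le_ncard_preimage_inl [Fintype W] {H : SimpleGraph W}
    (hχ : ¬ H.ContainsCopyOfDc χ) (g : Copy H (tripartiteRed α β χ)) :
    Fintype.card W - H.indepNumber ≤ {w | g w ∈ Set.range Sum.inl}.ncard := by
  have hB : H.IsIndep {w | g w ∈ Set.range (Sum.inr ∘ Sum.inl)} := by
    rintro u ⟨x, hx⟩ v ⟨y, hy⟩ - huv
    have hred : (tripartiteRed α β χ).Adj (g u) (g v) := g.toHom.map_adj huv
    rw [← hx, ← hy] at hred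
    exact hred
  obtain ⟨J, hBJ, hJ⟩ := hB.exists_isMaximalIndep_superset
  have hJC : ∀ w ∉ J, g w ∉ Set.range (Sum.inr ∘ Sum.inr) := by
    intro w hw hwC
    let c := (H.induce Jᶜ).connectedComponentMk ⟨w, hw⟩
    -- red edges leave `γ` only towards `β`, whose preimage lies in `J`
    have hclosed : ∀ ⦃u v : (Jᶜ : Set W)⦄, (H.induce Jᶜ).Adj u v →
        g u ∈ Set.range (Sum.inr ∘ Sum.inr) → g v ∈ Set.range (Sum.inr ∘ Sum.inr) := by
      rintro u v huv ⟨x, hx⟩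
      have hred : (tripartiteRed α β χ).Adj (g u) (g v) := g.toHom.map_adj huv
      have hvB : g v ∉ Set.range (Sum.inr ∘ Sum.inl) := fun h => v.2 (hBJ h)
      rw [← hx] at hred
      rcases hgv : g v with y | y | y <;> rw [hgv] at hred hvB
      · exact hred.elim
      · exact (hvB ⟨y, rfl⟩).elim
      · exact ⟨y, rfl⟩
    have hc : ∀ u : c.supp, g u.1.1 ∈ Set.range (Sum.inr ∘ Sum.inr) := fun u =>
      Reachable.mem_of_adj_closed (S := {u : (Jᶜ : Set W) | g u ∈ Set.range (Sum.inr ∘ Sum.inr)})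
        hclosed (ConnectedComponent.exact u.2).symm hwC
    refine hχ ⟨J, hJ, c, containsCopy_iff_isContained.2 ?_⟩
    rw [← tripartiteRed_comap (α := α) (β := β) (χ := χ)]
    exact isContained_comap_of_forall_mem_range
      (g.comp ((Copy.induce H Jᶜ).comp (Copy.induce _ c.supp))) _ hc
  have hJA : Jᶜ ⊆ {w | g w ∈ Set.range Sum.inl} := by
    intro w hw
    rcases hgw : g w with x | x | x
    · exact ⟨x, hgw.symm⟩
    · exact (hw (hBJ ⟨x, hgw.symm⟩)).elim
    · exact (hJC w hw ⟨x, hgw.symm⟩).elim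
  have hJα := hJ.1.ncard_le_indepNumber
  have hJJ := Set.ncard_add_ncard_compl J
  rw [Nat.card_eq_fintype_card] at hJJ
  have := Set.ncard_le_ncard hJA
  omega

theorem Copy.apply_mem_range_inr_inl_of_compl_tripartiteRed [Finite W] {H : SimpleGraph W}
    (hH : H.Connected) (hχ : ¬ H.ContainsCopyOfD χᶜ) (g : Copy H (tripartiteRed α β χ)ᶜ)
    (w : W) : g w ∈ Set.range (Sum.inr ∘ Sum.inl) := by
  obtain ⟨w₀, hw₀⟩ : ∃ w₀, g w₀ ∈ Set.range (Sum.inr ∘ Sum.inl) := by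
    by_contra! hB
    have hA : H.IsIndep {w | g w ∈ Set.range Sum.inl} := by
      rintro u ⟨x, hx⟩ v ⟨y, hy⟩ - huv
      have hblue : (tripartiteRed α β χ)ᶜ.Adj (g u) (g v) := g.toHom.map_adj huv
      rw [← hx, ← hy] at hblue
      simp [tripartiteRed] at hblue
    obtain ⟨J, hAJ, hJ⟩ := hA.exists_isMaximalIndep_superset
    have hJC : ∀ u : (Jᶜ : Set W), g u ∈ Set.range (Sum.inr ∘ Sum.inr) := by
      intro u
      rcases hgu : g u.1 with x | x | x
      · exact (u.2 (hAJ ⟨x, hgu.symm⟩)).elim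
      · exact (hB u ⟨x, hgu.symm⟩).elim
      · exact ⟨x, rfl⟩
    refine hχ ⟨J, hJ, containsCopy_iff_isContained.2 ?_⟩
    rw [← compl_tripartiteRed_comap (α := α) (β := β) (χ := χ)]
    exact isContained_comap_of_forall_mem_range (g.comp (Copy.induce H Jᶜ)) _ hJC
  -- blue edges leave `β` only towards `β`
  refine (hH.preconnected w₀ w).mem_of_adj_closed
    (S := {u | g u ∈ Set.range (Sum.inr ∘ Sum.inl)}) ?_ hw₀
  rintro u v huv ⟨x, hx⟩
  have hblue : (tripartiteRed α β χ)ᶜ.Adj (g u) (g v) := g.toHom.map_adj huv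
  rw [← hx] at hblue
  rcases hgv : g v with y | y | y <;> rw [hgv] at hblue
  · simp [tripartiteRed] at hblue
  · exact ⟨y, hgv.symm⟩
  · simp [tripartiteRed] at hblue

def nCopies.copy (H : SimpleGraph W) {n : ℕ} (i : Fin n) : Copy H (nCopies n H) :=
  ⟨⟨fun w => (i, w), fun h => ⟨rfl, h⟩⟩, fun _ _ h => congrArg Prod.snd h⟩

theorem not_nCopies_isContained_tripartiteRed [Fintype α] [Fintype W] {H : SimpleGraph W}
    {n : ℕ} (hχ : ¬ H.ContainsCopyOfDc χ)
    (hα : Fintype.card α < n * (Fintype.card W - H.indepNumber)) :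
    ¬ nCopies n H ⊑ tripartiteRed α β χ := by
  rintro ⟨g⟩
  have := card_mul_le_card_of_injective (f := g) g.injective Sum.inl_injective fun i =>
    (g.comp (nCopies.copy H i)).card_sub_indepNumber_le_ncard_preimage_inl hχ
  rw [Fintype.card_fin] at this
  omega

theorem not_nCopies_isContained_compl_tripartiteRed [Fintype β] [Fintype W]
    {H : SimpleGraph W} {n : ℕ} (hH : H.Connected) (hχ : ¬ H.ContainsCopyOfD χᶜ)
    (hβ : Fintype.card β < n * Fintype.card W) :
    ¬ nCopies n H ⊑ (tripartiteRed α β χ)ᶜ := by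
  rintro ⟨g⟩
  have hβW : ∀ i w, g (i, w) ∈ Set.range (Sum.inr ∘ Sum.inl) := fun i =>
    (g.comp (nCopies.copy H i)).apply_mem_range_inr_inl_of_compl_tripartiteRed hH hχ
  have := card_mul_le_card_of_injective (f := g) (m := Fintype.card W) g.injective
    (Sum.inr_injective.comp Sum.inl_injective) fun i => by simp [hβW i, Nat.card_eq_fintype_card]
  rw [Fintype.card_fin] at this
  omega

theorem exists_nCopies_free_and_free_compl [Fintype W] [Nontrivial W] {H : SimpleGraph W}
    (hH : H.Connected) {n : ℕ} (hn : 0 < n) :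
    ∃ Red : SimpleGraph (Fin ((2 * Fintype.card W - H.indepNumber) * n + H.ramseyDcD - 3)),
      (nCopies n H).Free Red ∧ (nCopies n H).Free Redᶜ := by
  obtain ⟨x, y, hxy⟩ := hH.exists_adj
  have hα := indepNumber_lt_card hxy
  obtain ⟨χ, hχDc, hχD⟩ := exists_not_containsCopyOfDc_not_containsCopyOfD_compl hxy
  have hsplit : (2 * Fintype.card W - H.indepNumber) * n =
      (Fintype.card W - H.indepNumber) * n + Fintype.card W * n := by
    rw [← add_mul]; congr 1; omega
  have hA : 0 < (Fintype.card W - H.indepNumber) * n := Nat.mul_pos (by omega) hn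
  have hB : 0 < Fintype.card W * n := Nat.mul_pos (by omega) hn
  have hred := not_nCopies_isContained_tripartiteRed
    (α := Fin ((Fintype.card W - H.indepNumber) * n - 1)) (β := Fin (Fintype.card W * n - 1))
    hχDc (by rw [Fintype.card_fin, mul_comm n]; omega)
  have hblue := not_nCopies_isContained_compl_tripartiteRed
    (α := Fin ((Fintype.card W - H.indepNumber) * n - 1)) (β := Fin (Fintype.card W * n - 1))
    hH hχD (by rw [Fintype.card_fin, mul_comm n]; omega)
  obtain ⟨e⟩ : Nonempty (Fin ((2 * Fintype.card W - H.indepNumber) * n + H.ramseyDcD - 3) ↪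
      Fin ((Fintype.card W - H.indepNumber) * n - 1) ⊕ Fin (Fintype.card W * n - 1) ⊕
        Fin (H.ramseyDcD - 1)) :=
    Function.Embedding.nonempty_of_card_le <| by
      simp only [Fintype.card_sum, Fintype.card_fin]; omega
  refine ⟨(tripartiteRed _ _ χ).comap e, fun h => ?_, fun h => ?_⟩
  · exact (IsContained.or_compl_of_comap e _ (.inl h)).elim hred hblue
  · exact (IsContained.or_compl_of_comap e _ (.inr h)).elim hred hblue

end Tripartite

end SimpleGraph

/-- For a connected graph `H` on `k ≥ 2` vertices with `α = α(H)` and every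
`n ≥ 1`, `r(nH) ≥ (2k - α)·n + r(𝒟_c(H), 𝒟(H)) - 2`; in particular the complete graph on
`(2k - α)·n + r(𝒟_c(H), 𝒟(H)) - 3` vertices admits a 2-colouring with no monochromatic
`nH`. -/
theorem ramsey_nCopies_lower_Dc (k : ℕ) (hk : 2 ≤ k) (H : SimpleGraph (Fin k))
    (hconn : H.Connected) (n : ℕ) (hn : 0 < n) :
    ((2 * (k : ℤ) - (H.indepNumber : ℤ)) * n + (H.ramseyDcD : ℤ) - 2 ≤
      ((SimpleGraph.nCopies n H).ramsey : ℤ)) ∧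
    ∃ Red : SimpleGraph (Fin ((2 * k - H.indepNumber) * n + H.ramseyDcD - 3)),
      ¬ (SimpleGraph.nCopies n H).ContainsCopy Red ∧
      ¬ (SimpleGraph.nCopies n H).ContainsCopy Redᶜ := by
  have : Nontrivial (Fin k) := Fin.nontrivial_iff_two_le.2 hk
  obtain ⟨x, y, hxy⟩ := hconn.exists_adj
  have hα : H.indepNumber < k := by simpa using SimpleGraph.indepNumber_lt_card hxy
  obtain ⟨Red, hRed, hRedc⟩ := Fintype.card_fin k ▸
    SimpleGraph.exists_nCopies_free_and_free_compl hconn hn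
  have hN := SimpleGraph.lt_ramsey_of_not_ramseyProp fun h =>
    (SimpleGraph.ramseyProp_iff.1 h Red).elim hRed hRedc
  refine ⟨?_, Red, mt SimpleGraph.containsCopy_iff_isContained.1 hRed,
    mt SimpleGraph.containsCopy_iff_isContained.1 hRedc⟩
  have hcast : (((2 * k - H.indepNumber) * n : ℕ) : ℤ) = (2 * (k : ℤ) - H.indepNumber) * n := by
    push_cast [Nat.cast_sub (by omega : H.indepNumber ≤ 2 * k)]
    ring
  omega
end

section
/- Let k ≥ 1 and let G be a graph on n ≥ 4^{k+9}·k³ vertices with independence number α(G) < k and minimum degree δ(G) ≥ (7/8)·n. Then for every set S ⊆ V(G) of k vertices and every set F ⊆ V(G) with S ⊆ F and |F| ≤ n/2, there exists a set L ⊆ V(G) \ F of size k² such that both the induced subgraph G[L] and the induced subgraph G[S ∪ L] admit perfect K_k-tilings (pairwise vertex-disjoint copies of K_k covering all vertices). -/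
open Finset

/-!
Since `α(G) < k`, the Erdős–Szekeres bound `r(k, k) ≤ 4^k` yields a `k`-clique `C` outside `F`;
match `S` with `C` by bijections `s i`, `c i`. By the minimum degree condition all but at most
`n/4` vertices are adjacent to both `s i` and `c i`, and `|F| ≤ n/2`, so greedily, for each `i`,
there is a `(k-1)`-clique `g i` among the common neighbours of `s i` and `c i`, disjoint from `F`,
from `C` and from the earlier ones. Then `L = ⋃ᵢ ({c i} ∪ g i)` has `k²` vertices and is tiled by
the cliques `{c i} ∪ g i`, while `S ∪ L` is tiled by `C` together with the cliques `{s i} ∪ g i`.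
-/

open Function

theorem Finset.exists_injective_image_univ_eq {α : Type*} [DecidableEq α] {s : Finset α} {n : ℕ}
    (h : #s = n) : ∃ f : Fin n → α, Injective f ∧ univ.image f = s := by
  set e := s.equivFinOfCardEq h
  refine ⟨fun i => e.symm i, Subtype.val_injective.comp e.symm.injective, ?_⟩
  ext x
  refine ⟨fun hx => ?_, fun hx => mem_image.mpr ⟨e ⟨x, hx⟩, mem_univ _, by simp⟩⟩
  obtain ⟨i, -, rfl⟩ := mem_image.mp hx
  exact (e.symm i).2

theorem Finset.pairwise_disjoint_on_insert {ι α : Type*} [DecidableEq α] {x : ι → α}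
    {g : ι → Finset α} (hx : Injective x) (hxg : ∀ i j, x i ∉ g j)
    (hg : Pairwise (Disjoint on g)) : Pairwise (Disjoint on fun i => insert (x i) (g i)) :=
  fun i j hij => by
    simp only [onFun, disjoint_insert_left, disjoint_insert_right, mem_insert, not_or]
    exact ⟨⟨(hx.ne hij).symm, hxg j i⟩, hxg i j, hg hij⟩

theorem four_mul_four_pow_add_sq_le {k : ℕ} (hk : 1 ≤ k) :
    4 * (4 ^ k + k ^ 2) ≤ 4 ^ (k + 9) * k ^ 3 := by
  have hsq : k ^ 2 ≤ 4 ^ k := by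
    rw [show 4 = 2 ^ 2 by rfl, ← pow_mul, mul_comm, pow_mul]
    exact Nat.pow_le_pow_left Nat.lt_two_pow_self.le 2
  calc 4 * (4 ^ k + k ^ 2) ≤ 4 ^ 9 * 4 ^ k := by omega
    _ = 4 ^ (k + 9) * 1 := by ring
    _ ≤ 4 ^ (k + 9) * k ^ 3 := Nat.mul_le_mul_left _ (Nat.one_le_pow _ _ hk)

namespace SimpleGraph

variable {V : Type*} (G : SimpleGraph V)

theorem indepNumber_eq_indepNum : G.indepNumber = G.indepNum := by
  simp only [indepNumber, indepNum, isNIndepSet_iff, IsIndep, IsIndepSet]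

theorem indepSetFree_of_indepNumber_lt [Finite V] {k : ℕ} (h : G.indepNumber < k) :
    G.IndepSetFree k := fun t ht => by
  have := ht.isIndepSet.card_le_indepNum
  rw [ht.card_eq, ← indepNumber_eq_indepNum] at this
  omega

variable [DecidableEq V]

section

variable [DecidableRel G.Adj]

theorem exists_isNClique_or_isNIndepSet :
    ∀ (m j : ℕ) (U : Finset V), (m + j).choose m ≤ #U →
      ∃ t ⊆ U, G.IsNClique m t ∨ G.IsNIndepSet j t
  | 0, _, _, _ => ⟨∅, empty_subset _, .inl (isNClique_empty.mpr rfl)⟩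
  | _ + 1, 0, _, _ => ⟨∅, empty_subset _, .inr ⟨by simp, rfl⟩⟩
  | m + 1, j + 1, U, hU => by
    have pascal : (m + 1 + (j + 1)).choose (m + 1) =
        (m + (j + 1)).choose m + (m + 1 + j).choose (m + 1) := by
      rw [show m + 1 + (j + 1) = m + (j + 1) + 1 by omega, Nat.choose_succ_succ',
        show m + 1 + j = m + (j + 1) by omega]
    obtain ⟨v, hv⟩ : U.Nonempty := card_pos.mp <| by
      have := Nat.choose_pos (n := m + (j + 1)) (k := m) (by omega); omega
    set N := {u ∈ U.erase v | G.Adj v u}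
    set M := {u ∈ U.erase v | ¬G.Adj v u}
    have hsplit : #N + #M + 1 = #U := by
      rw [card_filter_add_card_filter_not, card_erase_add_one hv]
    by_cases hN : (m + (j + 1)).choose m ≤ #N
    · obtain ⟨t, htN, ht⟩ := exists_isNClique_or_isNIndepSet m (j + 1) N hN
      have htU : t ⊆ U := htN.trans ((filter_subset _ _).trans (erase_subset _ _))
      rcases ht with ht | ht
      · refine ⟨insert v t, insert_subset hv htU, .inl (ht.insert fun b hb => ?_)⟩
        exact (mem_filter.mp (htN hb)).2
      · exact ⟨t, htU, .inr ht⟩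
    · obtain ⟨t, htM, ht⟩ := exists_isNClique_or_isNIndepSet (m + 1) j M (by omega)
      have htU : t ⊆ U := htM.trans ((filter_subset _ _).trans (erase_subset _ _))
      rcases ht with ht | ht
      · exact ⟨t, htU, .inl ht⟩
      · rw [← isNClique_compl] at ht
        refine ⟨insert v t, insert_subset hv htU,
          .inr ((isNClique_compl _).mp (ht.insert fun b hb => ?_))⟩
        have hb := mem_filter.mp (htM hb)
        exact (compl_adj G v b).mpr ⟨(ne_of_mem_erase hb.1).symm, hb.2⟩

variable [Fintype V]

theorem exists_isNClique_of_indepNumber_lt {k m : ℕ} (hα : G.indepNumber < k)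
    (hm : m ≤ k) {U : Finset V} (hU : 4 ^ k ≤ #U) : ∃ t ⊆ U, G.IsNClique m t := by
  have hchoose : (m + k).choose m ≤ #U :=
    calc (m + k).choose m ≤ 2 ^ (m + k) := Nat.choose_le_two_pow _ _
      _ ≤ 2 ^ (2 * k) := Nat.pow_le_pow_right two_pos (by omega)
      _ = 4 ^ k := by rw [pow_mul]; norm_num
      _ ≤ #U := hU
  obtain ⟨t, htU, ht | ht⟩ := G.exists_isNClique_or_isNIndepSet m k U hchoose
  · exact ⟨t, htU, ht⟩
  · exact (G.indepSetFree_of_indepNumber_lt hα t ht).elim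

theorem card_sub_two_mul_le_card_filter_adj_adj {d : ℕ}
    (hd : Fintype.card V ≤ G.minDegree + d) (v w : V) (A : Finset V) :
    #A - 2 * d ≤ #{u ∈ A | G.Adj v u ∧ G.Adj w u} := by
  have hnon : ∀ x, #{u ∈ A | ¬G.Adj x u} ≤ d := fun x =>
    calc #{u ∈ A | ¬G.Adj x u} ≤ #(G.neighborFinset x)ᶜ :=
          card_le_card fun u hu => by simpa using (mem_filter.mp hu).2
      _ = Fintype.card V - G.degree x := by rw [card_compl, card_neighborFinset_eq_degree]
      _ ≤ d := by have := G.minDegree_le_degree x; omega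
  have hbad : #{u ∈ A | ¬(G.Adj v u ∧ G.Adj w u)} ≤ 2 * d :=
    calc _ ≤ #({u ∈ A | ¬G.Adj v u} ∪ {u ∈ A | ¬G.Adj w u}) := card_le_card fun u hu => by
          simp only [mem_filter, mem_union, not_and_or] at hu ⊢
          tauto
      _ ≤ d + d := (card_union_le _ _).trans (add_le_add (hnon v) (hnon w))
      _ = 2 * d := (two_mul d).symm
  have := card_filter_add_card_filter_not (s := A) (p := fun u => G.Adj v u ∧ G.Adj w u)
  omega

theorem exists_pairwiseDisjoint_isNClique_commonNeighbors {ι : Type*} [DecidableEq ι]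
    {k m d : ℕ} (hα : G.indepNumber < k) (hm : m ≤ k) (hd : Fintype.card V ≤ G.minDegree + d)
    (a b : ι → V) (B : Finset V) (P : Finset ι)
    (hroom : 4 ^ k + #B + #P * m + 2 * d ≤ Fintype.card V) :
    ∃ g : ι → Finset V, (∀ i ∈ P, G.IsNClique m (g i) ∧ Disjoint (g i) B ∧
      ∀ v ∈ g i, G.Adj (a i) v ∧ G.Adj (b i) v) ∧ (P : Set ι).PairwiseDisjoint g := by
  induction P using Finset.induction_on with
  | empty => exact ⟨fun _ => ∅, by simp, by simp⟩
  | insert i P hiP ih =>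
    rw [card_insert_of_notMem hiP, add_one_mul] at hroom
    obtain ⟨g, hg, hgdisj⟩ := ih (by omega)
    set X := B ∪ P.biUnion g
    set A := {u ∈ Xᶜ | G.Adj (a i) u ∧ G.Adj (b i) u}
    have hX : #X ≤ #B + #P * m :=
      calc #X ≤ #B + #(P.biUnion g) := card_union_le _ _
        _ ≤ #B + ∑ j ∈ P, #(g j) := by grw [card_biUnion_le]
        _ = #B + #P * m := by
          rw [sum_congr rfl fun j hj => (hg j hj).1.card_eq, sum_const, smul_eq_mul]
    have hA : 4 ^ k ≤ #A := by
      have := G.card_sub_two_mul_le_card_filter_adj_adj hd (a i) (b i) Xᶜ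
      rw [card_compl] at this
      exact le_trans (by omega) this
    obtain ⟨D, hDA, hD⟩ := G.exists_isNClique_of_indepNumber_lt hα hm hA
    have hDX : Disjoint D X := Finset.disjoint_left.mpr fun v hv =>
      mem_compl.mp (mem_filter.mp (hDA hv)).1
    refine ⟨update g i D, ?_, ?_⟩
    · intro j hj
      rcases eq_or_ne j i with rfl | hji
      · rw [update_self]
        exact ⟨hD, (disjoint_union_right.mp hDX).1, fun v hv => (mem_filter.mp (hDA hv)).2⟩
      · rw [update_of_ne hji]
        exact hg j ((mem_insert.mp hj).resolve_left hji)
    · rw [coe_insert]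
      refine (hgdisj.mono_on fun j hj => ?_).insert fun j hj hij => ?_
      · rw [update_of_ne (ne_of_mem_of_not_mem hj hiP)]
      · rw [update_self, update_of_ne hij.symm]
        exact disjoint_of_subset_right (subset_biUnion_of_mem g hj)
          (disjoint_union_right.mp hDX).2

end

theorem hasPerfectKkTiling_induce_of_isNClique_of_biUnion_eq {ι : Type*} [Fintype ι] {k : ℕ}
    {L : Finset V} (t : ι → Finset V) (ht : ∀ i, G.IsNClique k (t i))
    (hdisj : Pairwise (Disjoint on t)) (hL : univ.biUnion t = L) :
    (G.induce (L : Set V)).HasPerfectKkTiling k := by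
  refine ⟨univ.image fun i => (t i).subtype (· ∈ (L : Set V)), ?_, ?_, ?_⟩
  · simp only [mem_image, mem_univ, true_and, forall_exists_index, forall_apply_eq_imp_iff]
    intro i
    have htL : t i ⊆ L := hL ▸ subset_biUnion_of_mem t (mem_univ i)
    refine ⟨fun x hx y hy hxy => (ht i).isClique (mem_subtype.mp hx) (mem_subtype.mp hy)
      (Subtype.coe_ne_coe.mpr hxy), ?_⟩
    rw [card_subtype, filter_true_of_mem fun x hx => mem_coe.mpr (htL hx), (ht i).card_eq]
  · simp only [coe_image, coe_univ, Set.image_univ]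
    rintro _ ⟨i, rfl⟩ _ ⟨j, rfl⟩ hne
    have hij : i ≠ j := by rintro rfl; exact hne rfl
    exact Finset.disjoint_left.mpr fun x hx hx' =>
      Finset.disjoint_left.mp (hdisj hij) (mem_subtype.mp hx) (mem_subtype.mp hx')
  · refine eq_univ_of_forall fun x => ?_
    obtain ⟨i, -, hxi⟩ := mem_biUnion.mp (hL ▸ x.2 : (x : V) ∈ univ.biUnion t)
    exact mem_biUnion.mpr ⟨_, mem_image_of_mem _ (mem_univ i), mem_subtype.mpr hxi⟩

theorem exists_absorber_of_commonNeighbor_cliques {m : ℕ} {F : Finset V}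
    {s c : Fin (m + 1) → V} {g : Fin (m + 1) → Finset V}
    (hs : Injective s) (hc : Injective c) (hsF : ∀ i, s i ∈ F)
    (hC : G.IsNClique (m + 1) (univ.image c)) (hCF : Disjoint (univ.image c) F)
    (hg : ∀ i, G.IsNClique m (g i) ∧ Disjoint (g i) (F ∪ univ.image c) ∧
      ∀ v ∈ g i, G.Adj (s i) v ∧ G.Adj (c i) v)
    (hgdisj : Pairwise (Disjoint on g)) :
    ∃ L : Finset V, Disjoint L F ∧ #L = (m + 1) ^ 2 ∧
      (G.induce (L : Set V)).HasPerfectKkTiling (m + 1) ∧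
      (G.induce ((univ.image s ∪ L : Finset V) : Set V)).HasPerfectKkTiling (m + 1) := by
  have hcC : ∀ i, c i ∈ univ.image c := fun i => mem_image_of_mem c (mem_univ i)
  have hsg : ∀ i j, s i ∉ g j := fun i j h =>
    Finset.disjoint_left.mp (hg j).2.1 h (mem_union_left _ (hsF i))
  have hcg : ∀ i j, c i ∉ g j := fun i j h =>
    Finset.disjoint_left.mp (hg j).2.1 h (mem_union_right _ (hcC i))
  have hclique : ∀ x : Fin (m + 1) → V, (∀ i, ∀ v ∈ g i, G.Adj (x i) v) →
      ∀ i, G.IsNClique (m + 1) (insert (x i) (g i)) := fun x hx i => (hg i).1.insert (hx i)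
  have hcclique := hclique c fun i v hv => ((hg i).2.2 v hv).2
  have hsclique := hclique s fun i v hv => ((hg i).2.2 v hv).1
  have hcdisj := pairwise_disjoint_on_insert hc hcg hgdisj
  have hsdisj := pairwise_disjoint_on_insert hs hsg hgdisj
  have hCs : ∀ i, Disjoint (univ.image c) (insert (s i) (g i)) := fun i =>
    disjoint_insert_right.mpr
      ⟨Finset.disjoint_right.mp hCF (hsF i), (disjoint_union_right.mp (hg i).2.1).2.symm⟩
  refine ⟨univ.biUnion fun i => insert (c i) (g i), ?_, ?_, ?_, ?_⟩
  · exact (disjoint_biUnion_left _ _ _).mpr fun i _ => disjoint_insert_left.mpr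
      ⟨Finset.disjoint_left.mp hCF (hcC i), (disjoint_union_right.mp (hg i).2.1).1⟩
  · rw [card_biUnion fun i _ j _ hij => hcdisj hij]
    simp [(hcclique _).card_eq, sq]
  · exact G.hasPerfectKkTiling_induce_of_isNClique_of_biUnion_eq _ hcclique hcdisj rfl
  · refine G.hasPerfectKkTiling_induce_of_isNClique_of_biUnion_eq
      (fun o : Option (Fin (m + 1)) => o.elim (univ.image c) fun i => insert (s i) (g i)) ?_ ?_ ?_
    · rintro (_ | i)
      exacts [hC, hsclique i]
    · rintro (_ | i) (_ | j) hij
      · exact absurd rfl hij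
      · exact hCs j
      · exact (hCs i).symm
      · exact hsdisj fun h => hij (congrArg some h)
    · ext x
      simp only [mem_biUnion, mem_univ, true_and, Option.exists, Option.elim, mem_insert,
        mem_union, mem_image, exists_or]
      grind

end SimpleGraph

theorem exists_local_absorber_general {V : Type*} [Fintype V] [DecidableEq V] (G : SimpleGraph V)
    [DecidableRel G.Adj] (k n : ℕ) (hn : Fintype.card V = n)
    (hbig : 4 ^ (k + 9) * k ^ 3 ≤ n) (hα : G.indepNumber < k)
    (hδ : (7 / 8 : ℝ) * (n : ℝ) ≤ (G.minDegree : ℝ)) :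
    ∀ S F : Finset V, S.card = k → S ⊆ F → 2 * F.card ≤ n →
      ∃ L : Finset V, Disjoint L F ∧ L.card = k ^ 2 ∧
        (G.induce (↑L : Set V)).HasPerfectKkTiling k ∧
        (G.induce (↑(S ∪ L) : Set V)).HasPerfectKkTiling k := by
  intro S F hS hSF hF
  obtain ⟨m, rfl⟩ : ∃ m, k = m + 1 := Nat.exists_eq_add_one.mpr (by omega)
  have hroom := (four_mul_four_pow_add_sq_le (k := m + 1) (by omega)).trans hbig
  have hdeg : 8 * (n - G.minDegree) ≤ n := by
    have : 7 * n ≤ 8 * G.minDegree := by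
      exact_mod_cast (by linarith : (7 : ℝ) * n ≤ 8 * G.minDegree)
    omega
  obtain ⟨C, hCF, hC⟩ := G.exists_isNClique_of_indepNumber_lt hα le_rfl (U := Fᶜ)
    (by rw [card_compl]; omega)
  obtain ⟨s, hs, rfl⟩ := exists_injective_image_univ_eq hS
  obtain ⟨c, hc, rfl⟩ := exists_injective_image_univ_eq hC.card_eq
  have hFC : #(F ∪ univ.image c) ≤ #F + (m + 1) :=
    (card_union_le _ _).trans_eq (congrArg _ hC.card_eq)
  have hsq : (m + 1) ^ 2 = (m + 1) * m + (m + 1) := by ring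
  obtain ⟨g, hg, hgdisj⟩ := G.exists_pairwiseDisjoint_isNClique_commonNeighbors hα m.le_succ
    (d := n - G.minDegree) (by omega) s c (F ∪ univ.image c) univ
    (by rw [card_univ, Fintype.card_fin]; omega)
  exact G.exists_absorber_of_commonNeighbor_cliques hs hc
    (fun i => hSF (mem_image_of_mem s (mem_univ i))) hC (subset_compl_iff_disjoint_right.mp hCF)
    (fun i => hg i (mem_univ i)) fun i j hij => hgdisj (by simp) (by simp) hij

/-- local absorbers from the proof of Lemma 3.1. If `G` is a graph on
`n ≥ 4^(k+9)·k³` vertices with `α(G) < k` and `δ(G) ≥ (7/8)·n`, then for every `k`-set `S`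
and every `F ⊇ S` with `|F| ≤ n/2` there is an `L ⊆ V(G) \ F` of size `k²` such that both
`G[L]` and `G[S ∪ L]` admit perfect `K_k`-tilings. -/
theorem exists_local_absorber {V : Type*} [Fintype V] [DecidableEq V] (G : SimpleGraph V)
    [DecidableRel G.Adj] (k n : ℕ) (hk : 1 ≤ k) (hn : Fintype.card V = n)
    (hbig : 4 ^ (k + 9) * k ^ 3 ≤ n) (hα : G.indepNumber < k)
    (hδ : (7 / 8 : ℝ) * (n : ℝ) ≤ (G.minDegree : ℝ)) :
    ∀ S F : Finset V, S.card = k → S ⊆ F → 2 * F.card ≤ n →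
      ∃ L : Finset V, Disjoint L F ∧ L.card = k ^ 2 ∧
        (G.induce (↑L : Set V)).HasPerfectKkTiling k ∧
        (G.induce (↑(S ∪ L) : Set V)).HasPerfectKkTiling k :=
  exists_local_absorber_general G k n hn hbig hα hδ
end

section
/- Let H be a graph on k vertices with at least one edge and independence number α = α(H). Consider a 2-coloured complete graph containing disjoint vertex sets R and B, each of size at least 2·2^{5k}, such that R contains no blue copy of H and B contains no red copy of H. Let v be a vertex outside R ∪ B, let c₁, c₂ ∈ {red, blue}, and suppose v has at least 2^{5k} neighbours in R joined to v by edges of colour c₁ and at least 2^{5k} neighbours in B joined to v by edges of colour c₂. If it is not the case that c₁ is blue and c₂ is red, then there exists an H-tie containing v whose remaining vertices lie in R ∪ B. -/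
open Finset

/-!
Write `α = α(H)` and let `N₁ ⊆ R`, `N₂ ⊆ B` be the neighbourhoods of `v` of colours `c₁`,
`c₂`; swapping the colours and `R` with `B` if necessary, `c₁` is red.

Fixing a maximum independent set of `H`, every copy of the complete split graph (an
independent `α`-set completely joined to a `(k - α)`-clique) contains `H`. Hence a red
`k`-clique `P` and a disjoint blue `(k - α)`-clique `Q` such that some `α` vertices of `P` are
blue to all of `Q` form an `H`-tie, and symmetrically with the colours exchanged.

Since `B` has no red `K_k`, the Erdős–Szekeres argument gives a blue `2k`-clique `Y ⊆ N₂`.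
Halving `N₁` once for every vertex of `Y` leaves `M ⊆ N₁` with `|M| ≥ 2^(3k)` to which each
vertex of `Y` is joined in a single colour; as `R` has no blue `K_k`, `M` contains red cliques
of every size up to `2k`. If at least `k - α` vertices of `Y` are blue to `M`, they form `Q`,
and `P` is `v` together with a red `(k - 1)`-clique of `M`. Otherwise at least `k` vertices of
`Y` are red to `M`; then `v` extends a red `(k - α - 1)`-clique of `M` if `c₂` is red, and
`k - 1` of those vertices to a blue `k`-clique if `c₂` is blue, all red to the other clique.
-/

namespace SimpleGraph

section

variable {V W : Type*}

theorem CopyIn.mono {H : SimpleGraph W} {G : SimpleGraph V} {A B : Set V} (hAB : A ⊆ B)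
    (h : H.CopyIn G A) : H.CopyIn G B :=
  let ⟨f, hf, hfA, hadj⟩ := h
  ⟨f, hf, fun a => hAB (hfA a), hadj⟩

theorem exists_isIndep_card_eq_indepNumber [Fintype W] (H : SimpleGraph W) :
    ∃ I : Finset W, H.IsIndep I ∧ #I = H.indepNumber :=
  Nat.sSup_mem (s := {n | ∃ I : Finset W, H.IsIndep ↑I ∧ #I = n})
    ⟨0, ∅, by simp [IsIndep]⟩
    ⟨Fintype.card W, by rintro _ ⟨I, -, rfl⟩; exact I.card_le_univ⟩

theorem indepNumber_lt_card_s17 [Fintype W] {H : SimpleGraph W} {a b : W} (hab : H.Adj a b) :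
    H.indepNumber < Fintype.card W := by
  obtain ⟨I, hI, hIcard⟩ := H.exists_isIndep_card_eq_indepNumber
  rw [← hIcard, ← card_univ]
  refine card_lt_card (ssubset_univ_iff.2 fun hIuniv => ?_)
  exact hI (by simp [hIuniv]) (by simp [hIuniv]) hab.ne hab

theorem indepNumber_le_card [Fintype W] (H : SimpleGraph W) :
    H.indepNumber ≤ Fintype.card W := by
  obtain ⟨I, -, hIcard⟩ := H.exists_isIndep_card_eq_indepNumber
  exact hIcard ▸ I.card_le_univ

theorem copyIn_union_of_isClique [Fintype W] [DecidableEq V] {H : SimpleGraph W}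
    {G : SimpleGraph V} {I : Finset W} (hI : H.IsIndep I) {T X : Finset V} (hTX : Disjoint T X)
    (hT : #I ≤ #T) (hX : Fintype.card W - #I ≤ #X) (hXG : G.IsClique X)
    (hTXG : ∀ a ∈ T, ∀ b ∈ X, G.Adj a b) : H.CopyIn G ↑(T ∪ X) := by
  classical
  obtain ⟨e⟩ : Nonempty ({a // a ∈ I} ↪ {x // x ∈ T}) :=
    Function.Embedding.nonempty_of_card_le (by simpa using hT)
  obtain ⟨e'⟩ : Nonempty ({a // a ∉ I} ↪ {x // x ∈ X}) :=
    Function.Embedding.nonempty_of_card_le (by simpa [card_compl] using hX)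
  set f : W → V := fun a => if h : a ∈ I then e ⟨a, h⟩ else e' ⟨a, h⟩
  have hfI : ∀ a ∈ I, f a ∈ T := fun a ha => by simp [f, ha]
  have hfX : ∀ a ∉ I, f a ∈ X := fun a ha => by simp [f, ha]
  have hf : Function.Injective f :=
    Function.Injective.dite _ (Subtype.val_injective.comp e.injective)
      (Subtype.val_injective.comp e'.injective)
      fun h => Finset.disjoint_left.1 hTX (e _).2 ((congrArg (· ∈ X) h).mpr (e' _).2)
  refine ⟨f, hf, fun a => ?_, fun a b hab => ?_⟩
  · by_cases ha : a ∈ I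
    · exact mem_union_left _ (hfI a ha)
    · exact mem_union_right _ (hfX a ha)
  · by_cases ha : a ∈ I <;> by_cases hb : b ∈ I
    · exact absurd hab (hI ha hb hab.ne)
    · exact hTXG _ (hfI a ha) _ (hfX b hb)
    · exact (hTXG _ (hfI b hb) _ (hfX a ha)).symm
    · exact hXG (hfX a ha) (hfX b hb) (hf.ne hab.ne)

theorem copyIn_of_isClique [Fintype W] {H : SimpleGraph W} {G : SimpleGraph V} {C : Finset V}
    (hC : G.IsClique C) (hCcard : Fintype.card W ≤ #C) : H.CopyIn G C := by
  classical
  simpa using copyIn_union_of_isClique (H := H) (I := ∅) (T := ∅) (by simp [IsIndep])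
    (disjoint_empty_left C) le_rfl (by simpa using hCcard) hC (by simp)

theorem exists_isNClique_or_exists_isNClique_compl [DecidableEq V] (G : SimpleGraph V) :
    ∀ (s t : ℕ) {A : Finset V}, 2 ^ (s + t) ≤ #A →
      (∃ C ⊆ A, G.IsNClique s C) ∨ ∃ C ⊆ A, Gᶜ.IsNClique t C
  | 0, _, _, _ => Or.inl ⟨∅, empty_subset _, by simp⟩
  | _, 0, _, _ => Or.inr ⟨∅, empty_subset _, by simp⟩
  | s + 1, t + 1, A, hA => by
    classical
    obtain ⟨x, hx⟩ : A.Nonempty := card_pos.1 (lt_of_lt_of_le (by positivity) hA)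
    set Nr := (A.erase x).filter (G.Adj x)
    set Nb := (A.erase x).filter (fun y => ¬ G.Adj x y)
    have hNr : Nr ⊆ A := (filter_subset _ _).trans (erase_subset _ _)
    have hNb : Nb ⊆ A := (filter_subset _ _).trans (erase_subset _ _)
    have hcard : #Nr + #Nb + 1 = #A := by
      rw [card_filter_add_card_filter_not, card_erase_add_one hx]
    rcases le_or_gt (2 ^ (s + (t + 1))) #Nr with hr | hr
    · rcases exists_isNClique_or_exists_isNClique_compl G s (t + 1) hr with
        ⟨C, hCN, hC⟩ | ⟨C, hCN, hC⟩
      · refine Or.inl ⟨insert x C, insert_subset hx (hCN.trans hNr), hC.insert fun y hy => ?_⟩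
        exact (mem_filter.1 (hCN hy)).2
      · exact Or.inr ⟨C, hCN.trans hNr, hC⟩
    · have hb : 2 ^ (s + 1 + t) ≤ #Nb := by
        have hpow : 2 ^ (s + 1 + (t + 1)) = 2 * 2 ^ (s + 1 + t) := by ring
        rw [show s + (t + 1) = s + 1 + t by ring] at hr
        omega
      rcases exists_isNClique_or_exists_isNClique_compl G (s + 1) t hb with
        ⟨C, hCN, hC⟩ | ⟨C, hCN, hC⟩
      · exact Or.inl ⟨C, hCN.trans hNb, hC⟩
      · refine Or.inr ⟨insert x C, insert_subset hx (hCN.trans hNb), hC.insert fun y hy => ?_⟩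
        obtain ⟨hyA, hxy⟩ := mem_filter.1 (hCN hy)
        exact (compl_adj G x y).2 ⟨(ne_of_mem_erase hyA).symm, hxy⟩

theorem exists_subset_forall_adj_and_forall_not_adj [DecidableEq V] (G : SimpleGraph V)
    (P A : Finset V) :
    ∃ Q ⊆ P, ∃ M ⊆ A, #A ≤ 2 ^ #P * #M ∧
      (∀ w ∈ Q, ∀ m ∈ M, G.Adj w m) ∧ ∀ w ∈ P \ Q, ∀ m ∈ M, ¬ G.Adj w m := by
  classical
  induction P using Finset.induction_on with
  | empty => exact ⟨∅, empty_subset _, A, subset_refl _, by simp, by simp, by simp⟩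
  | @insert x P hxP ih =>
    obtain ⟨Q, hQP, M, hMA, hM, hQM, hPQM⟩ := ih
    have hxQ : x ∉ Q := fun h => hxP (hQP h)
    set Mr := M.filter (G.Adj x)
    set Mb := M.filter (fun y => ¬ G.Adj x y)
    have hMcard : #Mr + #Mb = #M := card_filter_add_card_filter_not _
    have hAM : ∀ M' : Finset V, #M ≤ 2 * #M' → #A ≤ 2 ^ #(insert x P) * #M' :=
      fun M' hM' => by
      rw [card_insert_of_notMem hxP, pow_succ, mul_assoc]
      exact hM.trans (Nat.mul_le_mul_left _ hM')
    rcases le_total #Mb #Mr with hr | hb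
    · refine ⟨insert x Q, insert_subset_insert x hQP, Mr, (filter_subset _ _).trans hMA,
        hAM Mr (by omega), fun w hw m hm => ?_, fun w hw m hm => ?_⟩
      · rcases mem_insert.1 hw with rfl | hw
        · exact (mem_filter.1 hm).2
        · exact hQM w hw m (mem_of_mem_filter m hm)
      · rw [insert_sdiff_insert, mem_sdiff] at hw
        exact hPQM w (mem_sdiff.2 ⟨hw.1, fun h => hw.2 (mem_insert_of_mem h)⟩) m
          (mem_of_mem_filter m hm)
    · refine ⟨Q, hQP.trans (subset_insert x P), Mb, (filter_subset _ _).trans hMA,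
        hAM Mb (by omega), fun w hw m hm => hQM w hw m (mem_of_mem_filter m hm),
        fun w hw m hm => ?_⟩
      rw [insert_sdiff_of_notMem _ hxQ] at hw
      rcases mem_insert.1 hw with rfl | hw
      · exact (mem_filter.1 hm).2
      · exact hPQM w hw m (mem_of_mem_filter m hm)

theorem exists_isNClique_of_not_copyIn_compl [Fintype W] [DecidableEq V] {H : SimpleGraph W}
    {G : SimpleGraph V} {R A : Finset V} (hR : ¬ H.CopyIn Gᶜ R) (hAR : A ⊆ R) {m : ℕ}
    (hA : 2 ^ (m + Fintype.card W) ≤ #A) : ∃ C ⊆ A, G.IsNClique m C :=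
  (G.exists_isNClique_or_exists_isNClique_compl m _ hA).resolve_right fun ⟨_, hCA, hC⟩ =>
    hR ((copyIn_of_isClique hC.isClique hC.card_eq.ge).mono (coe_subset.2 (hCA.trans hAR)))

theorem IsTie.compl {k : ℕ} {H : SimpleGraph (Fin k)} {G : SimpleGraph V} {S : Finset V}
    (h : H.IsTie G S) : H.IsTie Gᶜ S :=
  ⟨h.1, h.2.2, by rw [compl_compl]; exact h.2.1⟩

end

section

variable {V : Type*} [DecidableEq V] {k : ℕ} {H : SimpleGraph (Fin k)} {G : SimpleGraph V}

theorem isTie_union {P Q T : Finset V} (hP : G.IsNClique k P)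
    (hQ : Gᶜ.IsNClique (k - H.indepNumber) Q) (hPQ : Disjoint P Q) (hTP : T ⊆ P) (hT : H.indepNumber ≤ #T)
    (hTQ : ∀ a ∈ T, ∀ b ∈ Q, Gᶜ.Adj a b) : H.IsTie G (P ∪ Q) := by
  obtain ⟨I, hI, hIcard⟩ := H.exists_isIndep_card_eq_indepNumber
  have hαk : H.indepNumber ≤ k := by simpa using H.indepNumber_le_card
  refine ⟨?_, ?_, ?_⟩
  · rw [card_union_of_disjoint hPQ, hP.card_eq, hQ.card_eq]
    omega
  · exact (copyIn_of_isClique hP.isClique (by simp [hP.card_eq])).mono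
      (coe_subset.2 subset_union_left)
  · have hTQ' : Disjoint T Q :=
      Finset.disjoint_left.2 fun a ha haQ => (hTQ a ha a haQ).ne rfl
    exact (copyIn_union_of_isClique hI hTQ' (hIcard ▸ hT)
      (by simp [hIcard, hQ.card_eq]) hQ.isClique hTQ).mono
      (coe_subset.2 (union_subset_union hTP subset_rfl))

theorem isTie_union_of_forall_adj {P Q : Finset V} (hP : Gᶜ.IsNClique k P)
    (hQ : G.IsNClique (k - H.indepNumber) Q) (hPQ : ∀ a ∈ P, ∀ b ∈ Q, G.Adj a b) :
    H.IsTie G (P ∪ Q) := by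
  have hαk : H.indepNumber ≤ k := by simpa using H.indepNumber_le_card
  simpa using (isTie_union (G := Gᶜ) hP (by rwa [compl_compl])
    (Finset.disjoint_left.2 fun a ha haQ => (hPQ a ha a haQ).ne rfl) subset_rfl
    (by rw [hP.card_eq]; exact hαk) (by simpa using hPQ)).compl

theorem exists_tie_of_forall_compl_adj (hα : H.indepNumber < k) {v : V} {M W : Finset V}
    (hM : ∃ K ⊆ M, G.IsNClique (k - 1) K) (hvM : ∀ u ∈ M, G.Adj v u)
    (hW : Gᶜ.IsClique W) (hWcard : k - H.indepNumber ≤ #W) (hvW : v ∉ W)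
    (hMW : ∀ a ∈ M, ∀ b ∈ W, Gᶜ.Adj a b) :
    ∃ S, H.IsTie G S ∧ v ∈ S ∧ S ⊆ insert v (M ∪ W) := by
  obtain ⟨K, hKM, hK⟩ := hM
  obtain ⟨Y, hYW, hYcard⟩ := exists_subset_card_eq hWcard
  have hvK : G.IsNClique k (insert v K) := by
    simpa [Nat.sub_add_cancel (by omega : 1 ≤ k)] using hK.insert fun u hu => hvM u (hKM hu)
  have hKY : Disjoint (insert v K) Y := disjoint_insert_left.2
    ⟨fun h => hvW (hYW h),
      Finset.disjoint_left.2 fun a ha haY => (hMW a (hKM ha) a (hYW haY)).ne rfl⟩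
  refine ⟨insert v K ∪ Y, ?_, by simp, by grind⟩
  exact isTie_union hvK ⟨hW.subset (coe_subset.2 hYW), hYcard⟩ hKY (subset_insert v K)
    (by rw [hK.card_eq]; omega) fun a ha b hb => hMW a (hKM ha) b (hYW hb)

theorem exists_tie_of_forall_adj (hα : H.indepNumber < k) {v : V} {M W : Finset V}
    (hM : ∀ m ≤ k - H.indepNumber, ∃ X ⊆ M, G.IsNClique m X) (hvM : ∀ u ∈ M, G.Adj v u)
    (hW : Gᶜ.IsClique W) (hWcard : k ≤ #W)
    (hvW : (∀ u ∈ W, G.Adj v u) ∨ ∀ u ∈ W, Gᶜ.Adj v u) (hWM : ∀ a ∈ W, ∀ b ∈ M, G.Adj a b) :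
    ∃ S, H.IsTie G S ∧ v ∈ S ∧ S ⊆ insert v (M ∪ W) := by
  rcases hvW with hvW | hvW
  · obtain ⟨X, hXM, hX⟩ := hM (k - H.indepNumber - 1) (by omega)
    obtain ⟨Z, hZW, hZcard⟩ := exists_subset_card_eq hWcard
    have hvX : G.IsNClique (k - H.indepNumber) (insert v X) := by
      simpa [Nat.sub_add_cancel (by omega : 1 ≤ k - H.indepNumber)] using
        hX.insert fun u hu => hvM u (hXM hu)
    refine ⟨Z ∪ insert v X,
      isTie_union_of_forall_adj ⟨hW.subset (coe_subset.2 hZW), hZcard⟩ hvX fun a ha b hb => ?_,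
      by simp, by grind⟩
    rcases mem_insert.1 hb with rfl | hb
    · exact (hvW a (hZW ha)).symm
    · exact hWM a (hZW ha) b (hXM hb)
  · obtain ⟨X, hXM, hX⟩ := hM (k - H.indepNumber) le_rfl
    obtain ⟨Z, hZW, hZcard⟩ := exists_subset_card_eq (show k - 1 ≤ #W by omega)
    have hvZ : Gᶜ.IsNClique k (insert v Z) := by
      simpa [Nat.sub_add_cancel (by omega : 1 ≤ k)] using
        (show Gᶜ.IsNClique (k - 1) Z from ⟨hW.subset (coe_subset.2 hZW), hZcard⟩).insert
          fun u hu => hvW u (hZW hu)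
    refine ⟨insert v Z ∪ X, isTie_union_of_forall_adj hvZ hX fun a ha b hb => ?_, by simp,
      by grind⟩
    rcases mem_insert.1 ha with rfl | ha
    · exact hvM b (hXM hb)
    · exact hWM a (hZW ha) b (hXM hb)

theorem exists_tie_of_large_neighbourhoods {a b : Fin k} (hab : H.Adj a b) {R B N₁ N₂ : Finset V}
    (hRB : Disjoint R B) (hR : ¬ H.CopyIn Gᶜ R) (hB : ¬ H.CopyIn G B) {v : V}
    (hv : v ∉ R ∪ B) (hN₁R : N₁ ⊆ R) (hN₂B : N₂ ⊆ B) (hN₁ : ∀ u ∈ N₁, G.Adj v u)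
    (hN₂ : (∀ u ∈ N₂, G.Adj v u) ∨ ∀ u ∈ N₂, Gᶜ.Adj v u)
    (h₁ : 2 ^ (5 * k) ≤ #N₁) (h₂ : 2 ^ (3 * k) ≤ #N₂) :
    ∃ S, H.IsTie G S ∧ v ∈ S ∧ S ⊆ insert v (R ∪ B) := by
  have hα : H.indepNumber < k := by simpa using indepNumber_lt_card_s17 hab
  obtain ⟨Y, hYN₂, hY⟩ : ∃ Y ⊆ N₂, Gᶜ.IsNClique (2 * k) Y :=
    exists_isNClique_of_not_copyIn_compl (H := H) (by rwa [compl_compl]) hN₂B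
      (by simpa [← add_one_mul] using h₂)
  obtain ⟨Q, hQY, M, hMN₁, hM, hQM, hYQM⟩ := G.exists_subset_forall_adj_and_forall_not_adj Y N₁
  have hM' : 2 ^ (3 * k) ≤ #M := by
    refine Nat.le_of_mul_le_mul_left (c := 2 ^ #Y) ?_ (Nat.two_pow_pos _)
    calc 2 ^ #Y * 2 ^ (3 * k) = 2 ^ (5 * k) := by rw [hY.card_eq, ← pow_add]; ring_nf
      _ ≤ 2 ^ #Y * #M := h₁.trans hM
  have hMred : ∀ m ≤ 2 * k, ∃ C ⊆ M, G.IsNClique m C := fun m hm =>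
    exists_isNClique_of_not_copyIn_compl hR (hMN₁.trans hN₁R)
      (le_trans (Nat.pow_le_pow_right (by norm_num) (by simp; omega)) hM')
  have hMY : Disjoint M Y := hRB.mono (hMN₁.trans hN₁R) (hYN₂.trans hN₂B)
  suffices ∃ S, H.IsTie G S ∧ v ∈ S ∧ S ⊆ insert v (M ∪ Y) by grind
  rcases le_or_gt (k - H.indepNumber) #(Y \ Q) with hYQ | hYQ
  · obtain ⟨S, hS, hvS, hSMY⟩ :=
      exists_tie_of_forall_compl_adj hα (hMred (k - 1) (by omega)) (fun u hu => hN₁ u (hMN₁ hu))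
        (hY.isClique.subset (coe_subset.2 sdiff_subset)) hYQ
      (fun h => hv (by grind)) fun a ha b hb => (compl_adj G a b).2
        ⟨fun h => Finset.disjoint_left.1 hMY ha (h ▸ (mem_sdiff.1 hb).1),
          fun h => hYQM b hb a ha h.symm⟩
    exact ⟨S, hS, hvS, hSMY.trans (by grind)⟩
  · have hQk : k ≤ #Q := by
      have := card_sdiff_add_card_eq_card hQY
      have := hY.card_eq
      omega
    obtain ⟨S, hS, hvS, hSMQ⟩ :=
      exists_tie_of_forall_adj hα (fun m hm => hMred m (by omega)) (fun u hu => hN₁ u (hMN₁ hu))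
        (hY.isClique.subset (coe_subset.2 hQY)) hQk
      (hN₂.imp (fun h u hu => h u (hYN₂ (hQY hu))) (fun h u hu => h u (hYN₂ (hQY hu)))) hQM
    exact ⟨S, hS, hvS, hSMQ.trans (by grind)⟩

end

end SimpleGraph

theorem Finset.ncard_coe_inter_setOf {V : Type*} (A : Finset V) (p : V → Prop)
    [DecidablePred p] :
    ((A : Set V) ∩ {u | p u}).ncard = #(A.filter p) := by
  rw [← Set.ncard_coe_finset, coe_filter]
  rfl

theorem exists_tie_general {V : Type*} [DecidableEq V] (k : ℕ)
    (H : SimpleGraph (Fin k)) (hedge : ∃ a b, H.Adj a b)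
    (Red : SimpleGraph V) (R B : Finset V) (hdisj : Disjoint R B)
    (hRblue : ¬ H.CopyIn Redᶜ ↑R) (hBred : ¬ H.CopyIn Red ↑B)
    (v : V) (hv : v ∉ R ∪ B) (c₁ c₂ : Bool)
    (h1 : 2 ^ (5 * k) ≤ ((↑R : Set V) ∩ {u | Red.colorAdj c₁ v u}).ncard)
    (h2 : 2 ^ (5 * k) ≤ ((↑B : Set V) ∩ {u | Red.colorAdj c₂ v u}).ncard)
    (hnot : ¬ (c₁ = false ∧ c₂ = true)) :
    ∃ S : Finset V, H.IsTie Red S ∧ v ∈ S ∧ ∀ u ∈ S, u ≠ v → u ∈ R ∪ B := by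
  classical
  obtain ⟨a, b, hab⟩ := hedge
  rw [ncard_coe_inter_setOf] at h1 h2
  have h3k : 2 ^ (3 * k) ≤ 2 ^ (5 * k) := Nat.pow_le_pow_right (by norm_num) (by omega)
  suffices ∃ S, H.IsTie Red S ∧ v ∈ S ∧ S ⊆ insert v (R ∪ B) by
    obtain ⟨S, hS, hvS, hSRB⟩ := this
    exact ⟨S, hS, hvS, fun u hu huv => (mem_insert.1 (hSRB hu)).resolve_left huv⟩
  cases c₁ with
  | true =>
    refine SimpleGraph.exists_tie_of_large_neighbourhoods hab hdisj hRblue hBred hv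
      (filter_subset _ R) (filter_subset _ B) (fun u hu => (mem_filter.1 hu).2) ?_ h1 (h3k.trans h2)
    cases c₂
    exacts [Or.inr fun u hu => (mem_filter.1 hu).2, Or.inl fun u hu => (mem_filter.1 hu).2]
  | false =>
    obtain rfl : c₂ = false := by simpa using hnot
    obtain ⟨S, hS, hvS, hSRB⟩ := SimpleGraph.exists_tie_of_large_neighbourhoods hab hdisj.symm
      (by rwa [compl_compl]) hRblue (by rwa [union_comm]) (filter_subset (Red.colorAdj false v) B)
      (filter_subset (Red.colorAdj false v) R) (fun u hu => (mem_filter.1 hu).2)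
      (Or.inl fun u hu => (mem_filter.1 hu).2) h2 (h3k.trans h1)
    exact ⟨S, by simpa using hS.compl, hvS, by rwa [union_comm]⟩

/-- Claim 4.5, tie-finding. Let `H` be a `k`-vertex graph with at least
one edge. In a 2-coloured complete graph with disjoint sets `R`, `B` of size at least
`2·2^(5k)` such that `R` has no blue copy of `H` and `B` has no red copy of `H`, if a vertex
`v ∉ R ∪ B` has at least `2^(5k)` neighbours of colour `c₁` in `R` and at least `2^(5k)`
neighbours of colour `c₂` in `B`, and it is not the case that `c₁` is blue and `c₂` is red,
then there is an `H`-tie containing `v` with all other vertices in `R ∪ B`.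
(`true` is red, `false` is blue.) -/
theorem exists_tie {V : Type*} [Fintype V] [DecidableEq V] (k : ℕ)
    (H : SimpleGraph (Fin k)) (hedge : ∃ a b, H.Adj a b)
    (Red : SimpleGraph V) (R B : Finset V) (hdisj : Disjoint R B)
    (hR : 2 * 2 ^ (5 * k) ≤ R.card) (hB : 2 * 2 ^ (5 * k) ≤ B.card)
    (hRblue : ¬ H.CopyIn Redᶜ ↑R) (hBred : ¬ H.CopyIn Red ↑B)
    (v : V) (hv : v ∉ R ∪ B) (c₁ c₂ : Bool)
    (h1 : 2 ^ (5 * k) ≤ ((↑R : Set V) ∩ {u | Red.colorAdj c₁ v u}).ncard)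
    (h2 : 2 ^ (5 * k) ≤ ((↑B : Set V) ∩ {u | Red.colorAdj c₂ v u}).ncard)
    (hnot : ¬ (c₁ = false ∧ c₂ = true)) :
    ∃ S : Finset V, H.IsTie Red S ∧ v ∈ S ∧ ∀ u ∈ S, u ≠ v → u ∈ R ∪ B :=
  exists_tie_general k H hedge Red R B hdisj hRblue hBred v hv c₁ c₂ h1 h2 hnot
end
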